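/- arXiv:1201.3543 — 2 statements merged into one kernel-verified Lean document; each statement's English description precedes it below -/
import Mathlib

section
/- A mapping G(f,S) = Σ_{R⊆N, R∩S≠∅} q_R^S a(R), where a is the Möbius transform of f, can be written in the form G(f,S) = Σ_{T⊆N∖S} p_T^S (f(T∪S) − f(T)) for some real coefficients p_T^S if and only if the coefficients q_R^S depend only on S and R∖S (i.e., q_R^S = q_{(R∖S)∪S}^S for all R with R∩S≠∅); in that case q_R^S = Σ_{R∖S ⊆ T ⊆ N∖S} p_T^S and p_T^S = Σ_{T ⊆ R ⊆ N∖S} (−1)^{|R|−|T|} q_{R∪S}^S. -/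
open Finset

/-- The Möbius transform `a(R) = Σ_{T⊆R}(−1)^{|R|−|T|} f(T)`. -/
noncomputable def moebius {n : ℕ} (f : Finset (Fin n) → ℝ) (R : Finset (Fin n)) : ℝ :=
  ∑ T ∈ R.powerset, (-1 : ℝ) ^ (R.card - T.card) * f T

/-- The mapping `G(f,S) = Σ_{R⊆N, R∩S≠∅} q_R^S a(R)` (for a fixed `S`). -/
noncomputable def Gmap {n : ℕ} (q : Finset (Fin n) → ℝ) (S : Finset (Fin n))
    (f : Finset (Fin n) → ℝ) : ℝ :=
  ∑ R ∈ (univ : Finset (Finset (Fin n))).filter (fun R => (R ∩ S).Nonempty),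
    q R * moebius f R

/-! With `a = moebius f` we have `f T = ∑_{R ⊆ T} a R`, so for `T` disjoint from `S` the
increment `f (T ∪ S) - f T` is the sum of `a R` over the `R ⊆ T ∪ S` that meet `S`. Hence
`∑_{T ⊆ N \ S} p T (f (T ∪ S) - f T) = ∑_{R ∩ S ≠ ∅} (∑_{R \ S ⊆ T ⊆ N \ S} p T) a R`, and since
every `a` is the Möbius transform of some `f`, this equals `G(f, S)` for all `f` iff
`q R = ∑_{R \ S ⊆ T ⊆ N \ S} p T` whenever `R` meets `S`. The right side depends on `R \ S` only,
and Möbius inversion on the subsets of `N \ S` turns `A ↦ q (A ∪ S)` back into `p`. -/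

namespace Finset

theorem sum_Icc_sum_Icc_comm {α M : Type*} [Preorder α] [LocallyFiniteOrder α] [AddCommMonoid M]
    (a b : α) (f : α → α → M) :
    ∑ x ∈ Icc a b, ∑ y ∈ Icc x b, f x y = ∑ y ∈ Icc a b, ∑ x ∈ Icc a y, f x y :=
  sum_comm' fun x y => by
    simp only [mem_Icc]
    exact ⟨fun ⟨⟨hax, _⟩, hxy, hyb⟩ => ⟨⟨hax, hxy⟩, hax.trans hxy, hyb⟩,
      fun ⟨⟨hax, hxy⟩, _, hyb⟩ => ⟨⟨hax, hxy.trans hyb⟩, hxy, hyb⟩⟩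

variable {α R : Type*} [DecidableEq α] [Ring R]

theorem sum_Icc_neg_one_pow_card_sub_card (s t : Finset α) :
    ∑ u ∈ Icc s t, (-1 : R) ^ (#u - #s) = if s = t then 1 else 0 := by
  by_cases hst : s ⊆ t
  · have hinj : Set.InjOn (s ∪ ·) (t \ s).powerset := fun w₁ hw₁ w₂ hw₂ h => by
      simp only [coe_powerset, Set.mem_preimage, Set.mem_powerset_iff, coe_subset,
        subset_sdiff] at hw₁ hw₂
      rw [← union_sdiff_cancel_left hw₁.2.symm, ← union_sdiff_cancel_left hw₂.2.symm]
      exact congrArg (· \ s) h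
    rw [Icc_eq_image_powerset hst, sum_image hinj]
    have hsign : ∀ w ∈ (t \ s).powerset, (-1 : R) ^ (#(s ∪ w) - #s) = (-1) ^ #w := fun w hw => by
      rw [card_union_of_disjoint (disjoint_of_subset_right (mem_powerset.1 hw) disjoint_sdiff),
        Nat.add_sub_cancel_left]
    have halt := congrArg (Int.cast : ℤ → R) (sum_powerset_neg_one_pow_card (x := t \ s))
    push_cast at halt
    have hempty : t \ s = ∅ ↔ s = t := by
      rw [sdiff_eq_empty_iff_subset]
      exact ⟨fun hts => hst.antisymm hts, fun h => h ▸ subset_rfl⟩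
    rw [sum_congr rfl hsign, halt]
    exact if_congr hempty rfl rfl
  · rw [Icc_eq_empty hst, sum_empty, if_neg (fun h : s = t => hst (h ▸ subset_rfl))]

theorem sum_Icc_neg_one_pow_card_sub_card' (s t : Finset α) :
    ∑ u ∈ Icc s t, (-1 : R) ^ (#t - #u) = if s = t then 1 else 0 := by
  have hsign : ∀ u ∈ Icc s t, (-1 : R) ^ (#t - #u) = (-1) ^ (#t - #s) * (-1) ^ (#u - #s) :=
    fun u hu => by
      obtain ⟨hsu, hut⟩ := mem_Icc.1 hu
      have hcard : #t - #s = (#t - #u) + (#u - #s) := by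
        have := card_le_card hsu; have := card_le_card hut; omega
      rw [hcard, pow_add, mul_assoc, ← pow_add, ← two_mul, pow_mul, neg_one_sq, one_pow, mul_one]
  rw [sum_congr rfl hsign, ← mul_sum, sum_Icc_neg_one_pow_card_sub_card]
  split_ifs with h <;> simp [h]

theorem moebius_inversion_Iic_iff (f a : Finset α → R) :
    (∀ t, f t = ∑ r ∈ Iic t, a r) ↔ ∀ r, a r = ∑ u ∈ Iic r, (-1) ^ (#r - #u) * f u := by
  simp only [← Icc_bot]
  constructor
  · intro h r
    simp_rw [h, mul_sum]
    rw [← sum_Icc_sum_Icc_comm]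
    simp_rw [← sum_mul, sum_Icc_neg_one_pow_card_sub_card', ite_mul, one_mul, zero_mul]
    simp
  · intro h t
    simp_rw [h, ← sum_Icc_sum_Icc_comm, ← sum_mul, sum_Icc_neg_one_pow_card_sub_card]
    simp

theorem moebius_inversion_Icc_iff (M : Finset α) (g p : Finset α → R) :
    (∀ a ⊆ M, g a = ∑ b ∈ Icc a M, p b) ↔
      ∀ t ⊆ M, p t = ∑ a ∈ Icc t M, (-1) ^ (#a - #t) * g a := by
  constructor
  · intro h t ht
    rw [sum_congr rfl fun a ha => by rw [h a (mem_Icc.1 ha).2], sum_congr rfl fun a _ => mul_sum ..,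
      sum_Icc_sum_Icc_comm]
    simp_rw [← sum_mul, sum_Icc_neg_one_pow_card_sub_card]
    simp [ht]
  · intro h a ha
    rw [sum_congr rfl fun b hb => h b (mem_Icc.1 hb).2]
    simp_rw [sum_Icc_sum_Icc_comm, ← sum_mul, sum_Icc_neg_one_pow_card_sub_card']
    simp [ha]

end Finset

section Moebius

variable {n : ℕ}

theorem moebius_eq_iff (f a : Finset (Fin n) → ℝ) :
    moebius f = a ↔ ∀ T, f T = ∑ R ∈ Iic T, a R := by
  rw [moebius_inversion_Iic_iff, funext_iff]
  simp only [moebius, Iic_eq_powerset, eq_comm]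

theorem sum_Iic_moebius (f : Finset (Fin n) → ℝ) (T : Finset (Fin n)) :
    ∑ R ∈ Iic T, moebius f R = f T :=
  ((moebius_eq_iff f _).1 rfl T).symm

theorem moebius_surjective : Function.Surjective (moebius (n := n)) :=
  fun a => ⟨fun T => ∑ R ∈ Iic T, a R, (moebius_eq_iff _ a).2 fun _ => rfl⟩

theorem forall_sum_mul_moebius_eq_iff (s : Finset (Finset (Fin n))) (c d : Finset (Fin n) → ℝ) :
    (∀ f, ∑ R ∈ s, c R * moebius f R = ∑ R ∈ s, d R * moebius f R) ↔ ∀ R ∈ s, c R = d R := by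
  rw [← moebius_surjective.forall (p := fun a => ∑ R ∈ s, c R * a R = ∑ R ∈ s, d R * a R)]
  refine ⟨fun h R hR => ?_, fun h a => sum_congr rfl fun R hR => by rw [h R hR]⟩
  simpa [hR] using h fun U => if U = R then 1 else 0

theorem sub_eq_sum_moebius_of_disjoint (f : Finset (Fin n) → ℝ) {T S : Finset (Fin n)}
    (hTS : Disjoint T S) :
    f (T ∪ S) - f T = ∑ R ∈ Iic (T ∪ S) with (R ∩ S).Nonempty, moebius f R := by
  have hmiss : {R ∈ Iic (T ∪ S) | ¬(R ∩ S).Nonempty} = Iic T := by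
    ext R
    simp only [mem_filter, mem_Iic, not_nonempty_iff_eq_empty, ← disjoint_iff_inter_eq_empty]
    exact ⟨fun ⟨hR, hRS⟩ => hRS.left_le_of_le_sup_right hR,
      fun hR => ⟨hR.trans subset_union_left, hTS.mono_left hR⟩⟩
  rw [← sum_Iic_moebius f (T ∪ S), ← sum_Iic_moebius f T, ← hmiss,
    ← sum_filter_add_sum_filter_not _ fun R => (R ∩ S).Nonempty, add_sub_cancel_right]

theorem sum_mul_sub_eq_sum_mul_moebius (S : Finset (Fin n)) (p f : Finset (Fin n) → ℝ) :
    ∑ T ∈ (univ \ S).powerset, p T * (f (T ∪ S) - f T) =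
      ∑ R ∈ univ with (R ∩ S).Nonempty, (∑ T ∈ Icc (R \ S) (univ \ S), p T) * moebius f R := by
  calc ∑ T ∈ (univ \ S).powerset, p T * (f (T ∪ S) - f T)
      = ∑ T ∈ (univ \ S).powerset, ∑ R ∈ Iic (T ∪ S) with (R ∩ S).Nonempty,
          p T * moebius f R := sum_congr rfl fun T hT => by
        rw [sub_eq_sum_moebius_of_disjoint f (subset_sdiff.1 (mem_powerset.1 hT)).2, mul_sum]
    _ = ∑ R ∈ univ with (R ∩ S).Nonempty, ∑ T ∈ Icc (R \ S) (univ \ S), p T * moebius f R :=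
        sum_comm' fun T R => by
          have : R ⊆ T ∪ S ↔ R \ S ⊆ T := sdiff_le_iff'.symm
          simp only [mem_powerset, mem_filter, mem_Iic, mem_univ, true_and, mem_Icc, this]
          tauto
    _ = _ := by simp_rw [sum_mul]

theorem forall_Gmap_eq_sum_mul_sub_iff (q : Finset (Fin n) → ℝ) (S : Finset (Fin n))
    (p : Finset (Fin n) → ℝ) :
    (∀ f, Gmap q S f = ∑ T ∈ (univ \ S).powerset, p T * (f (T ∪ S) - f T)) ↔
      ∀ R, (R ∩ S).Nonempty → q R = ∑ T ∈ Icc (R \ S) (univ \ S), p T := by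
  simp only [Gmap, sum_mul_sub_eq_sum_mul_moebius, forall_sum_mul_moebius_eq_iff, mem_filter,
    mem_univ, true_and]

end Moebius

/-- `G(·,S)` has the generalized-value form
`Σ_{T⊆N∖S} p_T^S (f(T∪S) − f(T))` iff the coefficients `q_R^S` depend only on `S` and
`R∖S`; and then `q_R^S = Σ_{R∖S⊆T⊆N∖S} p_T^S` and
`p_T^S = Σ_{T⊆R⊆N∖S} (−1)^{|R|−|T|} q_{R∪S}^S`. -/
theorem generalized_value_characterization (n : ℕ) (S : Finset (Fin n)) (hS : S.Nonempty)
    (q : Finset (Fin n) → ℝ) :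
    ((∃ pc : Finset (Fin n) → ℝ, ∀ f : Finset (Fin n) → ℝ,
        Gmap q S f = ∑ T ∈ (univ \ S).powerset, pc T * (f (T ∪ S) - f T))
      ↔ (∀ R : Finset (Fin n), (R ∩ S).Nonempty → q R = q ((R \ S) ∪ S)))
    ∧ (∀ pc : Finset (Fin n) → ℝ,
        (∀ f : Finset (Fin n) → ℝ,
          Gmap q S f = ∑ T ∈ (univ \ S).powerset, pc T * (f (T ∪ S) - f T)) →
        (∀ R : Finset (Fin n), (R ∩ S).Nonempty →
            q R = ∑ T ∈ ((univ \ S).powerset.filter (fun T => R \ S ⊆ T)), pc T)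
        ∧ (∀ T ∈ (univ \ S).powerset,
            pc T = ∑ R ∈ ((univ \ S).powerset.filter (fun R => T ⊆ R)),
              (-1 : ℝ) ^ (R.card - T.card) * q (R ∪ S))) := by
  simp only [← Icc_eq_filter_powerset, forall_Gmap_eq_sum_mul_sub_iff, mem_powerset]
  have hcoeff (p : Finset (Fin n) → ℝ)
      (hp : ∀ R, (R ∩ S).Nonempty → q R = ∑ T ∈ Icc (R \ S) (univ \ S), p T) :
      ∀ A ⊆ univ \ S, q (A ∪ S) = ∑ T ∈ Icc A (univ \ S), p T := fun A hA => by
    rw [hp _ (by rwa [union_inter_cancel_right]), union_sdiff_cancel_right (subset_sdiff.1 hA).2]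
  refine ⟨⟨fun ⟨p, hp⟩ R hR => ?_, fun hq => ?_⟩, fun p hp => ⟨hp, ?_⟩⟩
  · rw [hp R hR, hcoeff p hp _ (sdiff_subset_sdiff (subset_univ R) subset_rfl)]
  · refine ⟨fun T => ∑ A ∈ Icc T (univ \ S), (-1) ^ (#A - #T) * q (A ∪ S), fun R hR => ?_⟩
    rw [hq R hR]
    exact (moebius_inversion_Icc_iff _ (fun A => q (A ∪ S)) _).2 (fun _ _ => rfl) _
      (sdiff_subset_sdiff (subset_univ R) subset_rfl)
  · exact (moebius_inversion_Icc_iff _ _ _).1 (hcoeff p hp)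
end

section
/- For every pseudo-Boolean function f, every p ∈ (0,1)^n, and every S ⊆ N, Φ_{B,p}(f,S) = ⟨f, g_{S,p}⟩, where g_{S,p}(x) = Π_{i∈S}(x_i/p_i) − Π_{i∈S}((1−x_i)/(1−p_i)) and ⟨f,g⟩ = Σ_{x∈{0,1}^n} w(x)f(x)g(x) with w(x) = Π_{i∈N} p_i^{x_i}(1−p_i)^{1−x_i}. -/
open Finset

/-- The weighted Banzhaf influence index (generalized-value form). -/
noncomputable def wBanzhafInfluence {n : ℕ} (p : Fin n → ℝ) (f : Finset (Fin n) → ℝ)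
    (S : Finset (Fin n)) : ℝ :=
  ∑ T ∈ (univ \ S).powerset,
    ((∏ i ∈ T, p i) * ∏ i ∈ univ \ (S ∪ T), (1 - p i)) * (f (T ∪ S) - f T)

/-!
Expand `g_{S,p}` into its two products. The first one, `∏_{i∈S} x_i / p_i`, vanishes unless
`S ⊆ X` and then equals `(∏_{i∈S} p_i)⁻¹`, which cancels the `S`-part of the weight `w(X)`;
writing `X = T ∪ S` with `T ⊆ N ∖ S` gives the `f (T ∪ S)` half of `Φ_{B,p}(f,S)`. Symmetrically,
the second product vanishes unless `X` is disjoint from `S`, cancels the `(1 - p_i)`-factors over `S`,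
and gives the `f T` half.
-/

namespace WeightedBanzhaf

variable {ι K M : Type*} [DecidableEq ι] [Field K] [AddCommMonoid M]

theorem prod_ite_mem_div (p : ι → K) (S X : Finset ι) :
    ∏ i ∈ S, (if i ∈ X then (1 : K) else 0) / p i
      = if S ⊆ X then (∏ i ∈ S, p i)⁻¹ else 0 := by
  split_ifs with h
  · rw [← prod_inv_distrib]
    exact prod_congr rfl fun i hi => by simp [h hi]
  · obtain ⟨j, hjS, hjX⟩ := not_subset.mp h
    exact prod_eq_zero hjS (by simp [hjX])

theorem prod_one_sub_ite_mem_div (p : ι → K) (S X : Finset ι) :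
    ∏ i ∈ S, (1 - if i ∈ X then (1 : K) else 0) / (1 - p i)
      = if Disjoint S X then (∏ i ∈ S, (1 - p i))⁻¹ else 0 := by
  split_ifs with h
  · rw [← prod_inv_distrib]
    exact prod_congr rfl fun i hi => by simp [disjoint_left.mp h hi]
  · obtain ⟨j, hjS, hjX⟩ := not_disjoint_iff.mp h
    exact prod_eq_zero hjS (by simp [hjX])

variable [Fintype ι]

/-- The weight `w(x)` of the paper at the point `x = 𝟙_X`. -/
def productWeight (p : ι → K) (X : Finset ι) : K :=
  (∏ i ∈ X, p i) * ∏ i ∈ univ \ X, (1 - p i)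

theorem productWeight_union_mul_inv_prod {p : ι → K} {S T : Finset ι}
    (hp : ∀ i ∈ S, p i ≠ 0) (hT : Disjoint T S) :
    productWeight p (T ∪ S) * (∏ i ∈ S, p i)⁻¹
      = (∏ i ∈ T, p i) * ∏ i ∈ univ \ (S ∪ T), (1 - p i) := by
  have hS : ∏ i ∈ S, p i ≠ 0 := prod_ne_zero_iff.mpr hp
  rw [productWeight, prod_union hT, union_comm]
  field_simp

theorem productWeight_mul_inv_prod_one_sub {p : ι → K} {S T : Finset ι}
    (hp : ∀ i ∈ S, 1 - p i ≠ 0) (hT : Disjoint S T) :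
    productWeight p T * (∏ i ∈ S, (1 - p i))⁻¹
      = (∏ i ∈ T, p i) * ∏ i ∈ univ \ (S ∪ T), (1 - p i) := by
  have hS : ∏ i ∈ S, (1 - p i) ≠ 0 := prod_ne_zero_iff.mpr hp
  have hST : S ⊆ univ \ T := subset_sdiff.mpr ⟨subset_univ S, hT⟩
  rw [productWeight, ← prod_sdiff hST, sdiff_sdiff_left, sup_eq_union, union_comm T]
  field_simp

theorem sum_ite_subset_eq_sum_powerset_sdiff (S : Finset ι) (g : Finset ι → M) :
    ∑ X, (if S ⊆ X then g X else 0) = ∑ T ∈ (univ \ S).powerset, g (T ∪ S) := by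
  rw [← sum_filter]
  refine (sum_nbij' (· ∪ S) (· \ S) ?_ ?_ ?_ ?_ fun _ _ => rfl).symm
  · intro T _
    simp
  · intro X _
    simp [sdiff_subset_sdiff (subset_univ X) subset_rfl]
  · intro T hT
    exact union_sdiff_cancel_right (subset_sdiff.mp (mem_powerset.mp hT)).2
  · intro X hX
    exact sdiff_union_of_subset (mem_filter.mp hX).2

theorem sum_ite_disjoint_eq_sum_powerset_sdiff (S : Finset ι) (g : Finset ι → M) :
    ∑ X, (if Disjoint S X then g X else 0) = ∑ T ∈ (univ \ S).powerset, g T := by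
  rw [← sum_filter]
  congr 1
  ext T
  simp [subset_sdiff, disjoint_comm]

theorem sum_productWeight_mul_prod_ite_mem_div {p : ι → K} {S : Finset ι}
    (hp : ∀ i ∈ S, p i ≠ 0) (f : Finset ι → K) :
    ∑ X, productWeight p X * (∏ i ∈ S, (if i ∈ X then (1 : K) else 0) / p i) * f X
      = ∑ T ∈ (univ \ S).powerset,
          (∏ i ∈ T, p i) * (∏ i ∈ univ \ (S ∪ T), (1 - p i)) * f (T ∪ S) := by
  simp_rw [prod_ite_mem_div, mul_ite, ite_mul, mul_zero, zero_mul]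
  rw [sum_ite_subset_eq_sum_powerset_sdiff]
  refine sum_congr rfl fun T hT => ?_
  rw [productWeight_union_mul_inv_prod hp (subset_sdiff.mp (mem_powerset.mp hT)).2]

theorem sum_productWeight_mul_prod_one_sub_ite_mem_div {p : ι → K} {S : Finset ι}
    (hp : ∀ i ∈ S, 1 - p i ≠ 0) (f : Finset ι → K) :
    ∑ X, productWeight p X * (∏ i ∈ S, (1 - if i ∈ X then (1 : K) else 0) / (1 - p i)) * f X
      = ∑ T ∈ (univ \ S).powerset,
          (∏ i ∈ T, p i) * (∏ i ∈ univ \ (S ∪ T), (1 - p i)) * f T := by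
  simp_rw [prod_one_sub_ite_mem_div, mul_ite, ite_mul, mul_zero, zero_mul]
  rw [sum_ite_disjoint_eq_sum_powerset_sdiff]
  refine sum_congr rfl fun T hT => ?_
  rw [productWeight_mul_inv_prod_one_sub hp
    (disjoint_comm.mp (subset_sdiff.mp (mem_powerset.mp hT)).2)]

end WeightedBanzhaf

open WeightedBanzhaf in
/-- `Φ_{B,p}(f,S) = ⟨f, g_{S,p}⟩`, where
`g_{S,p}(x) = Π_{i∈S}(x_i/p_i) − Π_{i∈S}((1−x_i)/(1−p_i))` and
`⟨f,g⟩ = Σ_x w(x) f(x) g(x)` with `w(x) = Π_i p_i^{x_i}(1−p_i)^{1−x_i}`. -/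
theorem wBanzhafInfluence_eq_inner (n : ℕ) (p : Fin n → ℝ)
    (hp : ∀ i, p i ∈ Set.Ioo (0 : ℝ) 1) (f : Finset (Fin n) → ℝ) (S : Finset (Fin n)) :
    wBanzhafInfluence p f S
      = ∑ X : Finset (Fin n),
          ((∏ i ∈ X, p i) * ∏ i ∈ univ \ X, (1 - p i)) * (f X *
            ((∏ i ∈ S, (if i ∈ X then (1 : ℝ) else 0) / p i)
              - ∏ i ∈ S, (1 - (if i ∈ X then (1 : ℝ) else 0)) / (1 - p i))) := by
  have hp0 : ∀ i ∈ S, p i ≠ 0 := fun i _ => (hp i).1.ne'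
  have hp1 : ∀ i ∈ S, 1 - p i ≠ 0 := fun i _ => sub_ne_zero.mpr (hp i).2.ne'
  rw [wBanzhafInfluence]
  calc _ = ∑ T ∈ (univ \ S).powerset,
          (∏ i ∈ T, p i) * (∏ i ∈ univ \ (S ∪ T), (1 - p i)) * f (T ∪ S)
        - ∑ T ∈ (univ \ S).powerset,
          (∏ i ∈ T, p i) * (∏ i ∈ univ \ (S ∪ T), (1 - p i)) * f T := by
        rw [← sum_sub_distrib]
        simp_rw [mul_sub]
    _ = ∑ X, productWeight p X * (∏ i ∈ S, (if i ∈ X then (1 : ℝ) else 0) / p i) * f X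
        - ∑ X, productWeight p X
          * (∏ i ∈ S, (1 - if i ∈ X then (1 : ℝ) else 0) / (1 - p i)) * f X := by
        rw [sum_productWeight_mul_prod_ite_mem_div hp0,
          sum_productWeight_mul_prod_one_sub_ite_mem_div hp1]
    _ = _ := by
        rw [← sum_sub_distrib]
        refine sum_congr rfl fun X _ => ?_
        rw [productWeight]
        ring
end
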